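/- Let A be a 0-1 matrix with c rows and m columns, for nonempty T ⊆ [c] let k_T be the number of columns of A with support T, and for n ≥ m let I_n ⊆ R_n be the ideal generated by the Sym(n)-orbit of x^A. For an antichain C of nonempty subsets of [c] with k_C ≥ 1, let MG_C(n) be the set of matrices B ∈ {0,1}^{c×n} whose nonzero columns all have support in C, such that the numbers j_T := ℓ_T(B) satisfy Σ_{T∈C} j_T = n + 1 − k_C and, for every nonempty antichain C' of nonempty subsets of [c] with C' ⊆ ⌊C⌋ and C' ≠ C, Σ_{T ∈ C − ⟨C'⟩} j_T > k_{C'} − k_C. If n ≥ m and n ≥ k_C − 1 for every antichain C of nonempty subsets of [c] with k_C ≥ 1, then the set of minimal monomial generators of I_n^∨ equals {σ·x^B : σ ∈ Sym(n), C a nonempty antichain of nonempty subsets of [c] with k_C ≥ 1, B ∈ MG_C(n)}. -/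

import Mathlib

open MvPolynomial Finset

noncomputable section

/-- The squarefree monomial `x^B` with exponent matrix `B`, columns given as subsets of `[c]`. -/
def matMon (K : Type*) [CommSemiring K] {c n : ℕ}
    (B : Fin n → Finset (Fin c)) : MvPolynomial (Fin c × Fin n) K :=
  ∏ j : Fin n, ∏ i ∈ B j, X (i, j)

/-- `ℓ_T(B)`: the number of columns of `B` with support `T`. -/
def colCount {c n : ℕ} (B : Fin n → Finset (Fin c)) (T : Finset (Fin c)) : ℕ :=
  (univ.filter fun j => B j = T).card

/-- Pad a `c × m` matrix with zero columns to a `c × n` matrix. -/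
def pad {c m : ℕ} (n : ℕ) (A : Fin m → Finset (Fin c)) : Fin n → Finset (Fin c) :=
  fun j => if h : (j : ℕ) < m then A ⟨j, h⟩ else ∅

/-- The ideal generated by the `Sym(n)`-orbit of the squarefree monomial `x^A`. -/
def symOrbitIdeal (K : Type*) [CommSemiring K] {c n : ℕ}
    (A : Fin n → Finset (Fin c)) : Ideal (MvPolynomial (Fin c × Fin n) K) :=
  Ideal.span {p | ∃ σ : Equiv.Perm (Fin n),
    p = rename (fun v : Fin c × Fin n => (v.1, σ v.2)) (matMon K A)}

/-- The Alexander dual of a squarefree monomial ideal. -/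
def dualIdeal (K : Type*) [CommSemiring K] {c n : ℕ}
    (I : Ideal (MvPolynomial (Fin c × Fin n) K)) : Ideal (MvPolynomial (Fin c × Fin n) K) :=
  Ideal.span {p | ∃ B : Fin n → Finset (Fin c),
    matMon K (fun j => (B j)ᶜ) ∉ I ∧ p = matMon K B}

/-- `x^B` is a minimal (monomial) generator of `I`. -/
def IsMinGen (K : Type*) [CommSemiring K] {c n : ℕ}
    (I : Ideal (MvPolynomial (Fin c × Fin n) K)) (B : Fin n → Finset (Fin c)) : Prop :=
  matMon K B ∈ I ∧
    ∀ B'' : Fin n → Finset (Fin c), (∀ j, B'' j ⊆ B j) → B'' ≠ B → matMon K B'' ∉ I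

/-- `C` is an antichain of nonempty subsets of `[c]`. -/
def IsAntichainNE {c : ℕ} (C : Finset (Finset (Fin c))) : Prop :=
  (∀ T ∈ C, T ≠ ∅) ∧ ∀ T ∈ C, ∀ S ∈ C, T ⊆ S → T = S

/-- `k_C = ∑_{T ∈ 2^[c] − ⟨C⟩̄} k_T`. -/
def kC {c m : ℕ} (n : ℕ) (A : Fin m → Finset (Fin c)) (C : Finset (Finset (Fin c))) : ℕ :=
  ∑ T ∈ univ.filter (fun T : Finset (Fin c) => ¬∃ S ∈ C, S ⊆ Tᶜ), colCount (pad n A) T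

/-- `M𝒢_C(n)`: matrices whose nonzero columns all have support in `C`, with
`∑_{T∈C} j_T = n + 1 − k_C`, and such that `∑_{T ∈ C − ⟨C'⟩} j_T > k_{C'} − k_C` for every
nonempty antichain `C'` of nonempty subsets with `C' ⊆ ⌊C⌋` and `C' ≠ C`. -/
def MGC {c m : ℕ} (n : ℕ) (A : Fin m → Finset (Fin c)) (C : Finset (Finset (Fin c))) :
    Set (Fin n → Finset (Fin c)) :=
  {B | (∀ j, B j ≠ ∅ → B j ∈ C) ∧
    (∑ T ∈ C, colCount B T) + kC n A C = n + 1 ∧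
    ∀ C' : Finset (Finset (Fin c)), C'.Nonempty → IsAntichainNE C' →
      (∀ S ∈ C', ∃ T ∈ C, S ⊆ T) → C' ≠ C →
      kC n A C' < (∑ T ∈ C.filter (fun T => ¬∃ S ∈ C', S ⊆ T), colCount B T) + kC n A C}

section Comb
variable {c n : ℕ}

def kD (D : Fin n → Finset (Fin c)) (C : Finset (Finset (Fin c))) : ℕ :=
  ∑ T ∈ univ.filter (fun T : Finset (Fin c) => ¬∃ S ∈ C, S ⊆ Tᶜ), colCount D T

def IsUpset (F : Finset (Finset (Fin c))) : Prop :=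
  F.Nonempty ∧ ∅ ∉ F ∧ ∀ T ∈ F, ∀ T', T ⊆ T' → T' ∈ F

def hFc (D : Fin n → Finset (Fin c)) (F : Finset (Finset (Fin c))) : ℕ :=
  #(univ.filter fun j => D j ∈ F)

def gFc (B : Fin n → Finset (Fin c)) (F : Finset (Finset (Fin c))) : ℕ :=
  #(univ.filter fun l => (B l)ᶜ ∉ F)

def MemU (D B : Fin n → Finset (Fin c)) : Prop :=
  ∃ F, IsUpset F ∧ n + 1 ≤ hFc D F + gFc B F

def CMin (D B : Fin n → Finset (Fin c)) : Prop :=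
  MemU D B ∧ ∀ B'', (∀ j, B'' j ⊆ B j) → B'' ≠ B → ¬ MemU D B''

lemma univ_mem_upset {F : Finset (Finset (Fin c))} (h : IsUpset F) :
    (univ : Finset (Fin c)) ∈ F := by
  obtain ⟨⟨T, hT⟩, -, hup⟩ := h
  exact hup T hT univ (subset_univ T)

lemma colCount_sum_card (B : Fin n → Finset (Fin c)) (t : Finset (Finset (Fin c))) :
    ∑ T ∈ t, colCount B T = #(univ.filter fun l => B l ∈ t) := by
  rw [Finset.card_eq_sum_card_fiberwise (f := B) (s := univ.filter fun l => B l ∈ t) (t := t) (fun x hx => (mem_filter.mp hx).2)]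
  refine Finset.sum_congr rfl fun T hT => ?_
  unfold colCount
  congr 1
  ext l
  simp only [mem_filter, mem_univ, true_and]
  exact ⟨fun h => ⟨h ▸ hT, h⟩, fun h => h.2⟩

lemma kD_card (D : Fin n → Finset (Fin c)) (C : Finset (Finset (Fin c))) :
    kD D C = #(univ.filter fun j => ¬∃ S ∈ C, S ⊆ (D j)ᶜ) := by
  rw [kD, colCount_sum_card]
  congr 1
  ext j
  simp

lemma hFc_le (D : Fin n → Finset (Fin c)) (F : Finset (Finset (Fin c))) : hFc D F ≤ n := by
  exact (card_filter_le _ _).trans_eq (Finset.card_fin n)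

def FCa (C : Finset (Finset (Fin c))) : Finset (Finset (Fin c)) :=
  univ.filter fun T => ¬∃ S ∈ C, S ⊆ Tᶜ

lemma mem_FCa {C T : _} : T ∈ FCa (c := c) C ↔ ¬∃ S ∈ C, S ⊆ Tᶜ := by simp [FCa]

lemma FCa_upset {C : Finset (Finset (Fin c))} (hne : C.Nonempty) (hNE : ∀ T ∈ C, T ≠ ∅) :
    IsUpset (FCa C) := by
  refine ⟨⟨univ, ?_⟩, ?_, ?_⟩
  · rw [mem_FCa]
    rintro ⟨S, hS, hsub⟩
    rw [compl_univ, subset_empty] at hsub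
    exact hNE S hS hsub
  · rw [mem_FCa]
    obtain ⟨S, hS⟩ := hne
    intro h
    exact h ⟨S, hS, by simp⟩
  · intro T hT T' hsub
    rw [mem_FCa] at *
    rintro ⟨S, hS, h'⟩
    exact hT ⟨S, hS, h'.trans (compl_subset_compl.2 hsub)⟩

lemma hFc_FCa (D : Fin n → Finset (Fin c)) (C : Finset (Finset (Fin c))) :
    hFc D (FCa C) = kD D C := by
  rw [kD_card, hFc]
  congr 1
  ext j
  simp [mem_FCa]

lemma gFc_FCa (B : Fin n → Finset (Fin c)) (C : Finset (Finset (Fin c))) :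
    gFc B (FCa C) = #(univ.filter fun l => ∃ S ∈ C, S ⊆ B l) := by
  unfold gFc
  congr 1
  ext l
  simp [mem_FCa]

lemma exists_minimal_subset {Supp : Finset (Finset (Fin c))} {T : Finset (Fin c)}
    (hT : T ∈ Supp) :
    ∃ S ∈ Supp, S ⊆ T ∧ ∀ S' ∈ Supp, S' ⊆ S → S' = S := by
  obtain ⟨S, hS, hmin⟩ := Finset.exists_minimal (s := Supp.filter (· ⊆ T)) ⟨T, by simp [hT]⟩
  rw [mem_filter] at hS
  refine ⟨S, hS.1, hS.2, fun S' hS' hsub => ?_⟩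
  by_contra hne
  exact hne (le_antisymm (le_iff_subset.2 hsub) (hmin (mem_filter.2 ⟨hS', hsub.trans hS.2⟩) (le_iff_subset.2 hsub)))

lemma claimA (D B : Fin n → Finset (Fin c)) {F : Finset (Finset (Fin c))} (hup : IsUpset F)
    (hval : n + 1 ≤ hFc D F + gFc B F) :
    ∃ C', C'.Nonempty ∧ IsAntichainNE C' ∧ (∀ S ∈ C', ∃ l, S = B l) ∧
      n + 1 ≤ kD D C' + #(univ.filter fun l => ∃ S ∈ C', S ⊆ B l) := by
  classical
  set Supp := (univ.filter fun l => (B l)ᶜ ∉ F).image B with hSuppdef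
  have hSuppmem : ∀ T ∈ Supp, ∃ l, (B l)ᶜ ∉ F ∧ B l = T := by
    intro T hT
    rw [hSuppdef, mem_image] at hT
    obtain ⟨l, hl, hlT⟩ := hT
    exact ⟨l, (mem_filter.mp hl).2, hlT⟩
  have hSuppNE : ∀ T ∈ Supp, T ≠ ∅ := by
    intro T hT hTe
    obtain ⟨l, hl, hlT⟩ := hSuppmem T hT
    rw [hlT, hTe, compl_empty] at hl
    exact hl (univ_mem_upset hup)
  have hg1 : 1 ≤ gFc B F := by
    have := hFc_le D F
    omega
  obtain ⟨l₁, hl₁⟩ := Finset.card_pos.mp hg1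
  have hl₁' : (B l₁)ᶜ ∉ F := (mem_filter.mp hl₁).2
  have hBl₁ : B l₁ ∈ Supp := mem_image_of_mem B (mem_filter.2 ⟨mem_univ _, hl₁'⟩)
  set C' := Supp.filter (fun T => ∀ S ∈ Supp, S ⊆ T → S = T) with hC'def
  have hC'sub : C' ⊆ Supp := filter_subset _ _
  have hC'ne : C'.Nonempty := by
    obtain ⟨S, hS, -, hmin⟩ := exists_minimal_subset hBl₁
    exact ⟨S, mem_filter.2 ⟨hS, hmin⟩⟩
  refine ⟨C', hC'ne, ⟨fun T hT => hSuppNE T (hC'sub hT),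
    fun T hT S hS hsub => (mem_filter.mp hS).2 T (hC'sub hT) hsub⟩,
    fun S hS => (hSuppmem S (hC'sub hS)).imp (fun l hl => hl.2.symm), ?_⟩
  have h1 : hFc D F ≤ kD D C' := by
    rw [kD_card, hFc]
    apply card_le_card
    intro j hj
    rw [mem_filter] at hj ⊢
    refine ⟨mem_univ _, ?_⟩
    rintro ⟨S, hS, hsub⟩
    obtain ⟨l, hl, hlS⟩ := hSuppmem S (hC'sub hS)
    have : D j ⊆ Sᶜ := le_compl_comm.mp hsub
    have := hup.2.2 _ hj.2 _ this
    rw [hlS] at hl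
    exact hl this
  have h2 : gFc B F ≤ #(univ.filter fun l => ∃ S ∈ C', S ⊆ B l) := by
    apply card_le_card
    intro l hl
    rw [mem_filter] at hl ⊢
    refine ⟨mem_univ _, ?_⟩
    have hBlS : B l ∈ Supp := mem_image_of_mem B (mem_filter.2 ⟨mem_univ _, hl.2⟩)
    obtain ⟨S, hS, hsub, hmin⟩ := exists_minimal_subset hBlS
    refine ⟨S, mem_filter.2 ⟨hS, fun S' hS' hsub' => hmin S' hS' hsub'⟩, hsub⟩
  omega

lemma gFc_le_update (B : Fin n → Finset (Fin c)) (F : Finset (Finset (Fin c)))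
    (l₀ : Fin n) (s : Finset (Fin c)) :
    gFc B F ≤ gFc (Function.update B l₀ s) F + 1 := by
  unfold gFc
  have hsub : (univ.filter fun l => (B l)ᶜ ∉ F) ⊆
      insert l₀ (univ.filter fun l => ((Function.update B l₀ s l)ᶜ ∉ F)) := by
    intro l hl
    rcases eq_or_ne l l₀ with h | h
    · exact h ▸ mem_insert_self _ _
    · refine mem_insert_of_mem (mem_filter.2 ⟨mem_univ _, ?_⟩)
      rw [Function.update_of_ne h]
      exact (mem_filter.mp hl).2
  exact (card_le_card hsub).trans (card_insert_le _ _)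

lemma witness_erase {D B : Fin n → Finset (Fin c)}
    (hmin : ∀ B'', (∀ j, B'' j ⊆ B j) → B'' ≠ B → ¬ MemU D B'') {F : Finset (Finset (Fin c))}
    (hup : IsUpset F) (hval : n + 1 ≤ hFc D F + gFc B F) :
    ∀ l, ∀ i ∈ B l, (B l)ᶜ ∉ F ∧ ((B l).erase i)ᶜ ∈ F := by
  intro l i hi
  classical
  set B' := Function.update B l ((B l).erase i) with hB'def
  have hB'l : B' l = (B l).erase i := Function.update_self _ _ _
  have hsub : ∀ j, B' j ⊆ B j := by
    intro j
    rcases eq_or_ne j l with h | h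
    · rw [h, hB'l]; exact erase_subset _ _
    · rw [hB'def, Function.update_of_ne h]
  have hne : B' ≠ B := by
    intro h
    have := congrFun h l
    rw [hB'l] at this
    exact (Finset.erase_eq_self.mp this) hi
  have hnm : hFc D F + gFc B' F ≤ n := by
    by_contra h
    push_neg at h
    exact hmin B' hsub hne ⟨F, hup, h⟩
  constructor
  · intro hmem
    have : gFc B F ≤ gFc B' F := by
      apply card_le_card
      intro l' hl'
      rw [mem_filter] at hl' ⊢
      refine ⟨mem_univ _, ?_⟩
      rcases eq_or_ne l' l with h | h
      · exact absurd (h ▸ hmem) hl'.2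
      · rw [hB'def, Function.update_of_ne h]; exact hl'.2
    omega
  · by_contra hmem
    have : gFc B F ≤ gFc B' F := by
      apply card_le_card
      intro l' hl'
      rw [mem_filter] at hl' ⊢
      refine ⟨mem_univ _, ?_⟩
      rcases eq_or_ne l' l with h | h
      · rw [h, hB'l]; exact hmem
      · rw [hB'def, Function.update_of_ne h]; exact hl'.2
    omega

lemma witness_notin {D B : Fin n → Finset (Fin c)}
    (hmin : ∀ B'', (∀ j, B'' j ⊆ B j) → B'' ≠ B → ¬ MemU D B'') {F : Finset (Finset (Fin c))}
    (hup : IsUpset F) (hval : n + 1 ≤ hFc D F + gFc B F) :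
    ∀ l, B l ≠ ∅ → (B l)ᶜ ∉ F := by
  intro l hl
  obtain ⟨i, hi⟩ := Finset.nonempty_iff_ne_empty.mpr hl
  exact (witness_erase hmin hup hval l i hi).1

lemma filter_exists_card {B : Fin n → Finset (Fin c)} {C C' : Finset (Finset (Fin c))}
    (hsupp : ∀ j, B j ≠ ∅ → B j ∈ C) (hC' : ∀ S ∈ C', S ≠ ∅) :
    #(univ.filter fun l => ∃ S ∈ C', S ⊆ B l) =
      ∑ T ∈ C.filter (fun T => ∃ S ∈ C', S ⊆ T), colCount B T := by
  rw [colCount_sum_card]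
  congr 1
  ext l
  simp only [mem_filter, mem_univ, true_and]
  constructor
  · rintro ⟨S, hS, hsub⟩
    have hne : B l ≠ ∅ := by
      intro h
      rw [h, subset_empty] at hsub
      exact hC' S hS hsub
    exact ⟨hsupp l hne, S, hS, hsub⟩
  · rintro ⟨-, S, hS, hsub⟩
    exact ⟨S, hS, hsub⟩

lemma sum_colCount_C {B : Fin n → Finset (Fin c)} {C : Finset (Finset (Fin c))}
    (hsupp : ∀ j, B j ≠ ∅ → B j ∈ C) (hC1 : ∀ T ∈ C, T ≠ ∅) :
    ∑ T ∈ C, colCount B T = #(univ.filter fun l => B l ≠ ∅) := by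
  rw [colCount_sum_card]
  congr 1
  ext l
  simp only [mem_filter, mem_univ, true_and]
  exact ⟨fun h => hC1 _ h, fun h => hsupp l h⟩

lemma gFc_FCa_eq {B : Fin n → Finset (Fin c)} {C : Finset (Finset (Fin c))}
    (hsupp : ∀ j, B j ≠ ∅ → B j ∈ C) (hC1 : ∀ T ∈ C, T ≠ ∅) :
    gFc B (FCa C) = #(univ.filter fun l => B l ≠ ∅) := by
  rw [gFc_FCa]
  congr 1
  ext l
  simp only [mem_filter, mem_univ, true_and]
  constructor
  · rintro ⟨S, hS, hsub⟩
    intro h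
    rw [h, subset_empty] at hsub
    exact hC1 S hS hsub
  · intro h
    exact ⟨B l, hsupp l h, Finset.Subset.refl _⟩

theorem dir1 {D B : Fin n → Finset (Fin c)} {C : Finset (Finset (Fin c))}
    (hCne : C.Nonempty) (hC : IsAntichainNE C)
    (hsupp : ∀ j, B j ≠ ∅ → B j ∈ C)
    (hsum : (∑ T ∈ C, colCount B T) + kD D C = n + 1)
    (hineq : ∀ C', C'.Nonempty → IsAntichainNE C' → (∀ S ∈ C', ∃ T ∈ C, S ⊆ T) → C' ≠ C →
      kD D C' < (∑ T ∈ C.filter fun T => ¬∃ S ∈ C', S ⊆ T, colCount B T) + kD D C) :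
    CMin D B := by
  classical
  have hN : ∑ T ∈ C, colCount B T = #(univ.filter fun l => B l ≠ ∅) :=
    sum_colCount_C hsupp hC.1
  set N₀ := #(univ.filter fun l => B l ≠ ∅) with hN₀def
  constructor
  · refine ⟨FCa C, FCa_upset hCne hC.1, ?_⟩
    rw [hFc_FCa, gFc_FCa_eq hsupp hC.1]
    omega
  · intro B'' hsub hne ⟨F, hup, hval⟩
    obtain ⟨C', hC'ne, hC'ac, hC'supp, hbound⟩ := claimA D B'' hup hval
    have hsubC : ∀ S ∈ C', ∃ T ∈ C, S ⊆ T := by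
      intro S hS
      obtain ⟨l, rfl⟩ := hC'supp S hS
      have hBne : B l ≠ ∅ := by
        intro h
        have : B'' l ⊆ ∅ := h ▸ hsub l
        exact hC'ac.1 _ hS (subset_empty.mp this)
      exact ⟨B l, hsupp l hBne, hsub l⟩
    by_cases hCC : C' = C
    · subst hCC
      obtain ⟨l₀, hl₀⟩ : ∃ l, B'' l ≠ B l := by
        by_contra h
        push_neg at h
        exact hne (funext h)
      have hBl₀ : B l₀ ≠ ∅ := by
        intro h
        apply hl₀
        rw [h]
        exact subset_empty.mp (h ▸ hsub l₀)
      have hmem₀ : l₀ ∈ univ.filter fun l => B l ≠ ∅ := mem_filter.2 ⟨mem_univ _, hBl₀⟩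
      have hcnt : #(univ.filter fun l => ∃ S ∈ C', S ⊆ B'' l) ≤
          #((univ.filter fun l => B l ≠ ∅).erase l₀) := by
        apply card_le_card
        intro l hl
        obtain ⟨-, S, hS, hsubS⟩ := mem_filter.mp hl
        have hSB : S ⊆ B l := hsubS.trans (hsub l)
        have hBne : B l ≠ ∅ := by
          intro h
          rw [h, subset_empty] at hSB
          exact hC'ac.1 _ hS hSB
        have hSeq : S = B l := hC'ac.2 S hS (B l) (hsupp l hBne) hSB
        have hBeq : B'' l = B l := Finset.Subset.antisymm (hsub l) (hSeq ▸ hsubS)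
        exact mem_erase.2 ⟨fun h => hl₀ (h ▸ hBeq), mem_filter.2 ⟨mem_univ _, hBne⟩⟩
      rw [card_erase_of_mem hmem₀] at hcnt
      have hpos : 1 ≤ N₀ := Finset.card_pos.mpr ⟨l₀, hmem₀⟩
      omega
    · have hlt := hineq C' hC'ne hC'ac hsubC hCC
      have hcnt : #(univ.filter fun l => ∃ S ∈ C', S ⊆ B'' l) ≤
          #(univ.filter fun l => ∃ S ∈ C', S ⊆ B l) := by
        apply card_le_card
        intro l hl
        obtain ⟨-, S, hS, hsubS⟩ := mem_filter.mp hl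
        exact mem_filter.2 ⟨mem_univ _, S, hS, hsubS.trans (hsub l)⟩
      have ha : #(univ.filter fun l => ∃ S ∈ C', S ⊆ B l) =
          ∑ T ∈ C.filter (fun T => ∃ S ∈ C', S ⊆ T), colCount B T :=
        filter_exists_card hsupp hC'ac.1
      have hab := Finset.sum_filter_add_sum_filter_not C (fun T => ∃ S ∈ C', S ⊆ T)
        (colCount B)
      omega

theorem dir2 {D B : Fin n → Finset (Fin c)} (h : CMin D B) :
    ∃ C : Finset (Finset (Fin c)), C.Nonempty ∧ IsAntichainNE C ∧ 1 ≤ kD D C ∧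
      (∀ j, B j ≠ ∅ → B j ∈ C) ∧ (∑ T ∈ C, colCount B T) + kD D C = n + 1 ∧
      ∀ C', C'.Nonempty → IsAntichainNE C' → (∀ S ∈ C', ∃ T ∈ C, S ⊆ T) → C' ≠ C →
        kD D C' < (∑ T ∈ C.filter fun T => ¬∃ S ∈ C', S ⊆ T, colCount B T) + kD D C := by
  classical
  obtain ⟨⟨F₀, hup₀, hval₀⟩, hmin⟩ := h
  have hnz : ∃ l, B l ≠ ∅ := by
    by_contra hall
    push_neg at hall
    have : gFc B F₀ = 0 := by
      unfold gFc
      rw [Finset.card_eq_zero, Finset.filter_eq_empty_iff]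
      intro l _
      rw [hall l, compl_empty, not_not]
      exact univ_mem_upset hup₀
    have := hFc_le D F₀
    omega
  set C := (univ.filter fun l => B l ≠ ∅).image B with hCdef
  have hmemC : ∀ l, B l ≠ ∅ → B l ∈ C :=
    fun l hl => mem_image_of_mem B (mem_filter.2 ⟨mem_univ _, hl⟩)
  have hCmem : ∀ T ∈ C, ∃ l, B l ≠ ∅ ∧ B l = T := by
    intro T hT
    rw [hCdef, mem_image] at hT
    obtain ⟨l, hl, hlT⟩ := hT
    exact ⟨l, (mem_filter.mp hl).2, hlT⟩
  have hCNE : ∀ T ∈ C, T ≠ ∅ := by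
    intro T hT
    obtain ⟨l, hl, hlT⟩ := hCmem T hT
    exact hlT ▸ hl
  obtain ⟨l₁, hl₁⟩ := hnz
  have hCne : C.Nonempty := ⟨B l₁, hmemC l₁ hl₁⟩
  -- antichain
  have hCac : IsAntichainNE C := by
    refine ⟨hCNE, ?_⟩
    intro T hT S hS hsub
    by_contra hne
    obtain ⟨l₂, hl₂, hl₂S⟩ := hCmem S hS
    obtain ⟨l₃, hl₃, hl₃T⟩ := hCmem T hT
    obtain ⟨i, hiS, hiT⟩ := Finset.exists_of_ssubset (Finset.ssubset_iff_subset_ne.2 ⟨hsub, hne⟩)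
    have herase := (witness_erase hmin hup₀ hval₀ l₂ i (hl₂S ▸ hiS)).2
    have hTsub : T ⊆ (B l₂).erase i := by
      rw [hl₂S]
      exact subset_erase.2 ⟨hsub, hiT⟩
    have : Tᶜ ∈ F₀ := hup₀.2.2 _ herase _ (compl_subset_compl.2 hTsub)
    exact (hl₃T ▸ witness_notin hmin hup₀ hval₀ l₃ hl₃) this
  set N₀ := #(univ.filter fun l => B l ≠ ∅) with hN₀def
  have hN : ∑ T ∈ C, colCount B T = N₀ := sum_colCount_C hmemC hCNE
  -- any witness F : gFc B F = N₀ and F ⊆ FCa C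
  have hwitness : ∀ F, IsUpset F → n + 1 ≤ hFc D F + gFc B F →
      gFc B F = N₀ ∧ hFc D F ≤ kD D C := by
    intro F hup hval
    have hg : gFc B F = N₀ := by
      unfold gFc
      rw [hN₀def]
      congr 1
      ext l
      simp only [mem_filter, mem_univ, true_and]
      constructor
      · intro hl h
        rw [h, compl_empty] at hl
        exact hl (univ_mem_upset hup)
      · intro h
        exact witness_notin hmin hup hval l h
    have hsubF : F ⊆ FCa C := by
      intro T hT
      rw [mem_FCa]
      rintro ⟨S, hS, hsub⟩
      obtain ⟨l, hl, hlS⟩ := hCmem S hS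
      have : Sᶜ ∈ F := hup.2.2 _ hT _ (le_compl_comm.mp hsub)
      exact (hlS ▸ witness_notin hmin hup hval l hl) this
    refine ⟨hg, ?_⟩
    rw [← hFc_FCa D C]
    exact card_le_card (fun j hj => mem_filter.2 ⟨mem_univ _, hsubF (mem_filter.mp hj).2⟩)
  obtain ⟨hg₀, hh₀⟩ := hwitness F₀ hup₀ hval₀
  have hlow : n + 1 ≤ kD D C + N₀ := by omega
  have hgFC : gFc B (FCa C) = N₀ := gFc_FCa_eq hmemC hCNE
  have hupFC : IsUpset (FCa C) := FCa_upset hCne hCNE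
  -- upper bound: kD D C + N₀ ≤ n + 1
  have hup' : kD D C + N₀ ≤ n + 1 := by
    obtain ⟨i₁, hi₁⟩ := Finset.nonempty_iff_ne_empty.mpr hl₁
    set B' := Function.update B l₁ ((B l₁).erase i₁) with hB'def
    have hsub : ∀ j, B' j ⊆ B j := by
      intro j
      rcases eq_or_ne j l₁ with hh | hh
      · rw [hh, hB'def, Function.update_self]; exact erase_subset _ _
      · rw [hB'def, Function.update_of_ne hh]
    have hne : B' ≠ B := by
      intro hh
      have := congrFun hh l₁
      rw [hB'def, Function.update_self] at this
      exact (Finset.erase_eq_self.mp this) hi₁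
    have h1 : hFc D (FCa C) + gFc B' (FCa C) ≤ n := by
      by_contra hh
      push_neg at hh
      exact hmin B' hsub hne ⟨FCa C, hupFC, hh⟩
    have h2 := gFc_le_update B (FCa C) l₁ ((B l₁).erase i₁)
    rw [← hB'def] at h2
    rw [hFc_FCa] at h1
    omega
  have hsum : (∑ T ∈ C, colCount B T) + kD D C = n + 1 := by omega
  have hNle : N₀ ≤ n := by
    rw [hN₀def]
    exact (card_filter_le _ _).trans_eq (Finset.card_fin n)
  refine ⟨C, hCne, hCac, by omega, hmemC, hsum, ?_⟩
  intro C' hC'ne hC'ac hC'sub hC'neq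
  have hkey : kD D C' + #(univ.filter fun l => ∃ S ∈ C', S ⊆ B l) ≤ n := by
    by_contra hh
    push_neg at hh
    have hval' : n + 1 ≤ hFc D (FCa C') + gFc B (FCa C') := by
      rw [hFc_FCa, gFc_FCa]
      omega
    have hupFC' : IsUpset (FCa C') := FCa_upset hC'ne hC'ac.1
    -- every nonzero column support lies in C'
    have hCsubC' : C ⊆ C' := by
      intro T hT
      obtain ⟨l, hl, hlT⟩ := hCmem T hT
      have h1 : (B l)ᶜ ∉ FCa C' := witness_notin hmin hupFC' hval' l hl
      rw [mem_FCa, not_not] at h1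
      obtain ⟨S, hS, hsubS⟩ := h1
      rw [compl_compl] at hsubS
      have hSeq : S = B l := by
        by_contra hSne
        obtain ⟨i, hiB, hiS⟩ := Finset.exists_of_ssubset (Finset.ssubset_iff_subset_ne.2 ⟨hsubS, hSne⟩)
        have h2 := (witness_erase hmin hupFC' hval' l i hiB).2
        rw [mem_FCa] at h2
        apply h2
        refine ⟨S, hS, ?_⟩
        rw [compl_compl]
        exact subset_erase.2 ⟨hsubS, hiS⟩
      rw [← hlT, ← hSeq]
      exact hS
    have hC'subC : C' ⊆ C := by
      intro S hS
      obtain ⟨T, hT, hsubT⟩ := hC'sub S hS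
      have := hC'ac.2 S hS T (hCsubC' hT) hsubT
      exact this ▸ hT
    exact hC'neq (Finset.Subset.antisymm hC'subC hCsubC')
  have ha : #(univ.filter fun l => ∃ S ∈ C', S ⊆ B l) =
      ∑ T ∈ C.filter (fun T => ∃ S ∈ C', S ⊆ T), colCount B T :=
    filter_exists_card hmemC hC'ac.1
  have hab := Finset.sum_filter_add_sum_filter_not C (fun T => ∃ S ∈ C', S ⊆ T) (colCount B)
  omega

lemma memU_iff_no_matching (D B : Fin n → Finset (Fin c)) :
    MemU D B ↔ ¬ ∃ σ : Equiv.Perm (Fin n), ∀ j, D (σ j) ⊆ (B j)ᶜ := by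
  classical
  set t : Fin n → Finset (Fin n) := fun j => univ.filter fun l => D j ⊆ (B l)ᶜ with htdef
  have hmatch : (∃ σ : Equiv.Perm (Fin n), ∀ j, D (σ j) ⊆ (B j)ᶜ) ↔
      ∃ f : Fin n → Fin n, Function.Injective f ∧ ∀ j, f j ∈ t j := by
    constructor
    · rintro ⟨σ, hσ⟩
      refine ⟨⇑σ⁻¹, σ⁻¹.injective, fun j => mem_filter.2 ⟨mem_univ _, ?_⟩⟩
      have := hσ (σ⁻¹ j)
      rwa [← Equiv.Perm.mul_apply, mul_inv_cancel, Equiv.Perm.one_apply] at this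
    · rintro ⟨f, hinj, hf⟩
      have hbij : Function.Bijective f := Finite.injective_iff_bijective.mp hinj
      set e := Equiv.ofBijective f hbij with hedef
      refine ⟨e.symm, fun j => ?_⟩
      have := (mem_filter.mp (hf (e.symm j))).2
      have he : f (e.symm j) = j := e.apply_symm_apply j
      rwa [he] at this
  rw [hmatch, ← Finset.all_card_le_biUnion_card_iff_exists_injective t]
  push_neg
  constructor
  · rintro ⟨F, hup, hval⟩
    refine ⟨univ.filter fun j => D j ∈ F, ?_⟩
    have h1 : #(univ.filter fun j => D j ∈ F) = hFc D F := rfl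
    have h2 : (univ.filter fun j => D j ∈ F).biUnion t ⊆
        univ.filter fun l => (B l)ᶜ ∈ F := by
      intro l hl
      rw [Finset.mem_biUnion] at hl
      obtain ⟨j, hj, hjl⟩ := hl
      refine mem_filter.2 ⟨mem_univ _, ?_⟩
      exact hup.2.2 _ (mem_filter.mp hj).2 _ (mem_filter.mp hjl).2
    have h3 := card_le_card h2
    have h4 : #(univ.filter fun l => (B l)ᶜ ∈ F) + gFc B F = n := by
      have := Finset.card_filter_add_card_filter_not
        (s := (univ : Finset (Fin n))) (fun l => (B l)ᶜ ∈ F)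
      rw [Finset.card_fin] at this
      exact this
    omega
  · rintro ⟨s, hs⟩
    by_cases hempty : ∃ j ∈ s, D j = ∅
    · exfalso
      obtain ⟨j, hj, hDj⟩ := hempty
      have : (univ : Finset (Fin n)) ⊆ s.biUnion t := by
        intro l _
        rw [Finset.mem_biUnion]
        exact ⟨j, hj, mem_filter.2 ⟨mem_univ _, by rw [hDj]; exact empty_subset _⟩⟩
      have h1 := card_le_card this
      rw [Finset.card_fin] at h1
      have h2 := card_le_card (subset_univ s)
      rw [Finset.card_fin] at h2
      omega
    · push_neg at hempty
      have hsne : s.Nonempty := by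
        rcases s.eq_empty_or_nonempty with h | h
        · exfalso; rw [h] at hs; simp at hs
        · exact h
      refine ⟨univ.filter fun T => ∃ j ∈ s, D j ⊆ T, ⟨⟨D hsne.choose, ?_⟩, ?_, ?_⟩, ?_⟩
      · exact mem_filter.2 ⟨mem_univ _, hsne.choose, hsne.choose_spec, Finset.Subset.refl _⟩
      · rw [mem_filter]
        rintro ⟨-, j, hj, hsub⟩
        exact (hempty j hj).ne_empty (subset_empty.mp hsub)
      · intro T hT T' hsub
        obtain ⟨-, j, hj, hsub'⟩ := mem_filter.mp hT
        exact mem_filter.2 ⟨mem_univ _, j, hj, hsub'.trans hsub⟩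
      · have h1 : s ⊆ univ.filter fun j => D j ∈ univ.filter fun T => ∃ j ∈ s, D j ⊆ T := by
          intro j hj
          exact mem_filter.2 ⟨mem_univ _,
            mem_filter.2 ⟨mem_univ _, j, hj, Finset.Subset.refl _⟩⟩
        have h2 : ∀ l, ((B l)ᶜ ∈ univ.filter fun T => ∃ j ∈ s, D j ⊆ T) ↔ l ∈ s.biUnion t := by
          intro l
          rw [Finset.mem_biUnion, mem_filter]
          constructor
          · rintro ⟨-, j, hj, hsub⟩
            exact ⟨j, hj, mem_filter.2 ⟨mem_univ _, hsub⟩⟩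
          · rintro ⟨j, hj, hjl⟩
            exact ⟨mem_univ _, j, hj, (mem_filter.mp hjl).2⟩
        have h3 : gFc B (univ.filter fun T => ∃ j ∈ s, D j ⊆ T) =
            #(univ.filter fun l => l ∉ s.biUnion t) := by
          unfold gFc
          congr 1
          ext l
          simp only [mem_filter, mem_univ, true_and]
          exact not_congr (by simpa using h2 l)
        have h4 : #(univ.filter fun l => l ∈ s.biUnion t) +
            #(univ.filter fun l => l ∉ s.biUnion t) = n := by
          have := Finset.card_filter_add_card_filter_not
            (s := (univ : Finset (Fin n))) (fun l => l ∈ s.biUnion t)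
          rw [Finset.card_fin] at this
          exact this
        have h5 : univ.filter (fun l => l ∈ s.biUnion t) = s.biUnion t := by
          ext l
          simp
        have h6 := card_le_card h1
        rw [h5] at h4
        have h7 : #(univ.filter fun j => D j ∈ univ.filter fun T => ∃ j ∈ s, D j ⊆ T) =
            hFc D (univ.filter fun T => ∃ j ∈ s, D j ⊆ T) := rfl
        omega

end Comb

section Poly
variable {c n : ℕ}

def eB (B : Fin n → Finset (Fin c)) : (Fin c × Fin n) →₀ ℕ :=
  Finsupp.onFinset univ (fun v => if v.1 ∈ B v.2 then 1 else 0) (fun v _ => mem_univ v)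

lemma eB_apply (B : Fin n → Finset (Fin c)) (v : Fin c × Fin n) :
    eB B v = if v.1 ∈ B v.2 then 1 else 0 := rfl

lemma support_eB (B : Fin n → Finset (Fin c)) :
    (eB B).support = univ.filter fun v => v.1 ∈ B v.2 := by
  ext v
  rw [Finsupp.mem_support_iff, eB_apply, mem_filter]
  by_cases h : v.1 ∈ B v.2 <;> simp [h]

lemma matMon_eq_monomial (K : Type*) [CommSemiring K] (B : Fin n → Finset (Fin c)) :
    matMon K B = monomial (eB B) (1 : K) := by
  classical
  have h2 : (monomial (eB B)) (1 : K) = ∏ v ∈ univ.filter (fun v : Fin c × Fin n => v.1 ∈ B v.2), X v := by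
    rw [MvPolynomial.monomial_eq, map_one, one_mul, Finsupp.prod, support_eB]
    refine Finset.prod_congr rfl fun v hv => ?_
    rw [eB_apply, if_pos (mem_filter.mp hv).2, pow_one]
  rw [h2, Finset.prod_filter]
  rw [Fintype.prod_prod_type (fun v : Fin c × Fin n => if v.1 ∈ B v.2 then (X v : MvPolynomial _ K) else 1)]
  rw [Finset.prod_comm]
  unfold matMon
  refine Finset.prod_congr rfl fun j _ => ?_
  rw [← Finset.prod_filter]
  congr 1
  ext i
  simp

lemma eB_le_iff {G B : Fin n → Finset (Fin c)} : eB G ≤ eB B ↔ ∀ j, G j ⊆ B j := by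
  rw [Finsupp.le_def]
  constructor
  · intro h j i hi
    have := h (i, j)
    rw [eB_apply, eB_apply] at this
    simp only [if_pos hi] at this
    by_contra hni
    rw [if_neg hni] at this
    omega
  · intro h v
    rw [eB_apply, eB_apply]
    by_cases hG : v.1 ∈ G v.2
    · rw [if_pos hG, if_pos (h v.2 hG)]
    · rw [if_neg hG]
      omega

lemma rename_matMon (K : Type*) [CommSemiring K] (σ : Equiv.Perm (Fin n))
    (B : Fin n → Finset (Fin c)) :
    rename (fun v : Fin c × Fin n => (v.1, σ v.2)) (matMon K B) =
      matMon K (fun j => B (σ⁻¹ j)) := by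
  have hfun : (fun v : Fin c × Fin n => (v.1, σ v.2)) =
      ⇑((Equiv.refl (Fin c)).prodCongr σ) := rfl
  have hmap : Finsupp.mapDomain (⇑((Equiv.refl (Fin c)).prodCongr σ)) (eB B) =
      eB (fun j => B (σ⁻¹ j)) := by
    ext v
    obtain ⟨i, j⟩ := v
    rw [Finsupp.mapDomain_equiv_apply, eB_apply, eB_apply]
    simp [Equiv.prodCongr_symm, Equiv.prodCongr_apply]
  rw [matMon_eq_monomial, matMon_eq_monomial, hfun, rename_monomial, hmap]

lemma mem_span_monomials {σ' : Type*} {K : Type*} [CommSemiring K] [Nontrivial K]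
    (S : Set (σ' →₀ ℕ)) (e : σ' →₀ ℕ) :
    (monomial e (1 : K)) ∈ Ideal.span {p | ∃ d ∈ S, p = monomial d (1 : K)} ↔
      ∃ d ∈ S, d ≤ e := by
  classical
  constructor
  · intro hmem
    by_contra hno
    have key : ∀ e' : σ' →₀ ℕ, (¬ ∃ d ∈ S, d ≤ e') →
        MvPolynomial.coeff e' (monomial e (1 : K)) = 0 := by
      have : ∀ p, p ∈ Ideal.span {p | ∃ d ∈ S, p = monomial d (1 : K)} →
          ∀ e' : σ' →₀ ℕ, (¬ ∃ d ∈ S, d ≤ e') → MvPolynomial.coeff e' p = 0 := by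
        intro p hp
        refine Submodule.span_induction ?_ ?_ ?_ ?_ hp
        · rintro q ⟨d, hd, rfl⟩ e' he'
          rw [MvPolynomial.coeff_monomial]
          split_ifs with h
          · exact absurd ⟨d, hd, h ▸ le_refl e'⟩ he'
          · rfl
        · intro e' _
          exact MvPolynomial.coeff_zero e'
        · intro p q hp hq ihp ihq e' he'
          rw [MvPolynomial.coeff_add, ihp e' he', ihq e' he', add_zero]
        · intro r q hq ihq e' he'
          rw [smul_eq_mul, MvPolynomial.coeff_mul]
          refine Finset.sum_eq_zero fun x hx => ?_
          rw [Finset.HasAntidiagonal.mem_antidiagonal] at hx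
          rw [ihq x.2 ?_, mul_zero]
          rintro ⟨d, hd, hle⟩
          refine he' ⟨d, hd, hle.trans ?_⟩
          rw [← hx]
          exact le_add_self
      exact this _ hmem
    have := key e hno
    rw [MvPolynomial.coeff_monomial, if_pos rfl] at this
    exact one_ne_zero this
  · rintro ⟨d, hd, hle⟩
    have h1 : (monomial d (1 : K)) ∈ Ideal.span {p | ∃ d ∈ S, p = monomial d (1 : K)} :=
      Ideal.subset_span ⟨d, hd, rfl⟩
    have h2 : monomial (e - d) (1 : K) * monomial d 1 = monomial e 1 := by
      rw [MvPolynomial.monomial_mul, one_mul, tsub_add_cancel_of_le hle]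
    exact h2 ▸ Ideal.mul_mem_left _ _ h1

lemma mem_symOrbit_iff {K : Type*} [CommSemiring K] [Nontrivial K]
    (D Dd : Fin n → Finset (Fin c)) :
    matMon K Dd ∈ symOrbitIdeal K D ↔ ∃ σ : Equiv.Perm (Fin n), ∀ j, D (σ j) ⊆ Dd j := by
  have hset : {p : MvPolynomial (Fin c × Fin n) K | ∃ σ : Equiv.Perm (Fin n),
      p = rename (fun v : Fin c × Fin n => (v.1, σ v.2)) (matMon K D)} =
      {p | ∃ d ∈ {d | ∃ σ : Equiv.Perm (Fin n), d = eB (fun j => D (σ j))},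
        p = monomial d (1 : K)} := by
    ext p
    constructor
    · rintro ⟨σ, rfl⟩
      exact ⟨eB (fun j => D (σ⁻¹ j)), ⟨σ⁻¹, rfl⟩,
        by rw [rename_matMon, matMon_eq_monomial]⟩
    · rintro ⟨d, ⟨σ, rfl⟩, rfl⟩
      refine ⟨σ⁻¹, ?_⟩
      rw [rename_matMon, matMon_eq_monomial]
      simp
  rw [symOrbitIdeal, hset, matMon_eq_monomial, mem_span_monomials]
  constructor
  · rintro ⟨d, ⟨σ, rfl⟩, hle⟩
    exact ⟨σ, eB_le_iff.mp hle⟩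
  · rintro ⟨σ, h⟩
    exact ⟨_, ⟨σ, rfl⟩, eB_le_iff.mpr h⟩

lemma mem_dual_iff {K : Type*} [CommSemiring K] [Nontrivial K]
    (I : Ideal (MvPolynomial (Fin c × Fin n) K)) (B : Fin n → Finset (Fin c)) :
    matMon K B ∈ dualIdeal K I ↔
      ∃ G : Fin n → Finset (Fin c), (∀ j, G j ⊆ B j) ∧
        matMon K (fun j => (G j)ᶜ) ∉ I := by
  have hset : {p : MvPolynomial (Fin c × Fin n) K | ∃ B' : Fin n → Finset (Fin c),
      matMon K (fun j => (B' j)ᶜ) ∉ I ∧ p = matMon K B'} =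
      {p | ∃ d ∈ {d | ∃ B' : Fin n → Finset (Fin c),
        matMon K (fun j => (B' j)ᶜ) ∉ I ∧ d = eB B'}, p = monomial d (1 : K)} := by
    ext p
    constructor
    · rintro ⟨B', hB', rfl⟩
      exact ⟨eB B', ⟨B', hB', rfl⟩, by rw [matMon_eq_monomial]⟩
    · rintro ⟨d, ⟨B', hB', rfl⟩, rfl⟩
      exact ⟨B', hB', by rw [matMon_eq_monomial]⟩
  rw [dualIdeal, hset, matMon_eq_monomial, mem_span_monomials]
  constructor
  · rintro ⟨d, ⟨B', hB', rfl⟩, hle⟩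
    exact ⟨B', eB_le_iff.mp hle, hB'⟩
  · rintro ⟨G, hle, hG⟩
    exact ⟨eB G, ⟨G, hG, rfl⟩, eB_le_iff.mpr hle⟩

lemma notMem_orbit_iff {K : Type*} [CommSemiring K] [Nontrivial K]
    (D B : Fin n → Finset (Fin c)) :
    matMon K (fun j => (B j)ᶜ) ∉ symOrbitIdeal K D ↔ MemU D B := by
  rw [mem_symOrbit_iff, memU_iff_no_matching]

lemma isMinGen_iff {K : Type*} [CommSemiring K] [Nontrivial K]
    (D B : Fin n → Finset (Fin c)) :
    IsMinGen K (dualIdeal K (symOrbitIdeal K D)) B ↔ CMin D B := by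
  unfold IsMinGen CMin
  have hm : ∀ B' : Fin n → Finset (Fin c),
      matMon K B' ∈ dualIdeal K (symOrbitIdeal K D) ↔
        ∃ G, (∀ j, G j ⊆ B' j) ∧ MemU D G := by
    intro B'
    rw [mem_dual_iff]
    constructor
    · rintro ⟨G, h1, h2⟩
      exact ⟨G, h1, (notMem_orbit_iff D G).mp h2⟩
    · rintro ⟨G, h1, h2⟩
      exact ⟨G, h1, (notMem_orbit_iff D G).mpr h2⟩
  constructor
  · rintro ⟨h1, h2⟩
    obtain ⟨G, hG1, hG2⟩ := (hm B).mp h1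
    have hGB : G = B := by
      by_contra hne
      exact (h2 G hG1 hne) ((hm G).mpr ⟨G, fun j => Finset.Subset.refl _, hG2⟩)
    refine ⟨hGB ▸ hG2, ?_⟩
    intro B'' hsub hne hmem
    exact h2 B'' hsub hne ((hm B'').mpr ⟨B'', fun j => Finset.Subset.refl _, hmem⟩)
  · rintro ⟨h1, h2⟩
    refine ⟨(hm B).mpr ⟨B, fun j => Finset.Subset.refl _, h1⟩, ?_⟩
    intro B'' hsub hne hmem
    obtain ⟨G, hG1, hG2⟩ := (hm B'').mp hmem
    have hGB : G ≠ B := by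
      intro h
      subst h
      exact hne (funext fun j => Finset.Subset.antisymm (hsub j) (hG1 j))
    exact h2 G (fun j => (hG1 j).trans (hsub j)) hGB hG2

lemma colCount_comp (σ : Equiv.Perm (Fin n)) (B : Fin n → Finset (Fin c))
    (T : Finset (Fin c)) :
    colCount (fun j => B (σ j)) T = colCount B T := by
  unfold colCount
  exact Finset.card_equiv σ (fun j => by simp)

end Poly

lemma kC_eq_kD {c m : ℕ} (n : ℕ) (A : Fin m → Finset (Fin c)) (C : Finset (Finset (Fin c))) :
    kC n A C = kD (pad n A) C := rfl

/-- **Minimal generators of the Alexander dual, one-orbit case.**  If `n ≥ m` and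
`n ≥ k_C − 1` for every antichain `C` of nonempty subsets with `k_C ≥ 1`, then the minimal
monomial generators of `I_n^∨` are exactly the monomials `σ·x^B` with `C` a nonempty
antichain of nonempty subsets of `[c]`, `k_C ≥ 1` and `B ∈ M𝒢_C(n)`. -/
theorem one_orbit_dual_minimal_generators (K : Type*) [Field K] {c m : ℕ} (hc : 0 < c)
    (n : ℕ) (hmn : m ≤ n) (A : Fin m → Finset (Fin c))
    (hbig : ∀ C : Finset (Finset (Fin c)), IsAntichainNE C → 1 ≤ kC n A C →
      kC n A C ≤ n + 1) :
    {p : MvPolynomial (Fin c × Fin n) K | ∃ B : Fin n → Finset (Fin c),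
        IsMinGen K (dualIdeal K (symOrbitIdeal K (pad n A))) B ∧ p = matMon K B} =
      {p : MvPolynomial (Fin c × Fin n) K | ∃ C : Finset (Finset (Fin c)),
        C.Nonempty ∧ IsAntichainNE C ∧ 1 ≤ kC n A C ∧
        ∃ B ∈ MGC n A C, ∃ σ : Equiv.Perm (Fin n),
          p = rename (fun v : Fin c × Fin n => (v.1, σ v.2)) (matMon K B)} := by
  ext p
  simp only [Set.mem_setOf_eq]
  constructor
  · rintro ⟨B, hmin, rfl⟩
    have hcm : CMin (pad n A) B := (isMinGen_iff (pad n A) B).mp hmin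
    obtain ⟨C, h1, h2, h3, h4, h5, h6⟩ := dir2 hcm
    refine ⟨C, h1, h2, ?_, B, ⟨h4, ?_, ?_⟩, 1, ?_⟩
    · rw [kC_eq_kD]; exact h3
    · rw [kC_eq_kD]; exact h5
    · intro C' hC'ne hC'ac hC'sub hC'neq
      rw [kC_eq_kD, kC_eq_kD]
      exact h6 C' hC'ne hC'ac hC'sub hC'neq
    · rw [rename_matMon]
      rfl
  · rintro ⟨C, hCne, hCac, hk, B, hBmem, σ, rfl⟩
    obtain ⟨hb1, hb2, hb3⟩ := hBmem
    have hcc : ∀ T, colCount (fun j => B (σ⁻¹ j)) T = colCount B T := colCount_comp σ⁻¹ B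
    refine ⟨fun j => B (σ⁻¹ j), ?_, rename_matMon K σ B⟩
    refine (isMinGen_iff (pad n A) _).mpr (dir1 hCne hCac (fun j hj => hb1 _ hj) ?_ ?_)
    · rw [Finset.sum_congr rfl (fun T _ => hcc T), ← kC_eq_kD]
      exact hb2
    · intro C' hC'ne hC'ac hC'sub hC'neq
      rw [Finset.sum_congr rfl (fun T _ => hcc T), ← kC_eq_kD, ← kC_eq_kD]
      exact hb3 C' hC'ne hC'ac hC'sub hC'neq


end
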